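/- Let r, s > 1 with 1/r + 1/s = 1, let d = d_p·h, and let the Gaussian RBF kernel 𝔎_RBF(q, k) = exp(−‖q − k‖₂²/(2σ²)) be used with σ² ≥ (2d_p)^{1/s}. Let X̃ ∈ ℝ^{L×d} satisfy ‖X̃ᵀ‖_{r,∞} ≤ R̃. Let W = {(W_i^q, W_i^k, W_i^v)}_{i=1}^h and Ŵ = {(Ŵ_i^q, Ŵ_i^k, Ŵ_i^v)}_{i=1}^h be parameter tuples with W_i^q, W_i^k, Ŵ_i^q, Ŵ_i^k ∈ ℝ^{d×d_p} and W_i^v, Ŵ_i^v ∈ ℝ^{d×d}, satisfying for each i ∈ [h]: ‖(W_i^q)ᵀ‖_r ≤ ω_i^q, ‖(W_i^k)ᵀ‖_r ≤ ω_i^k, ‖(W_i^v)ᵀ‖_r ≤ ω_i^v (and the same bounds for Ŵ), and ‖(W_i^q − Ŵ_i^q)ᵀ‖_{r,s} ≤ ε_i^q, ‖(W_i^k − Ŵ_i^k)ᵀ‖_{r,s} ≤ ε_i^k, ‖(W_i^v − Ŵ_i^v)ᵀ‖_{r,s} ≤ ε_i^v. Then ‖mha(X̃; W)ᵀ − mha(X̃;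 Ŵ)ᵀ‖_{r,∞} ≤ R̃ · Σ_{i=1}^h ε_i^v + R̃³ · Σ_{i=1}^h (ω_i^q + ω_i^k) · ω_i^v · (ε_i^q + ε_i^k). -/

import Mathlib

open Matrix

/-- The vector `ℓ_r`-norm on `Fin m → ℝ`. -/
noncomputable def lrNorm {m : ℕ} (r : ℝ) (v : Fin m → ℝ) : ℝ :=
  (∑ i, |v i| ^ r) ^ (1 / r)

/-- The matrix `(r,s)`-norm: the `ℓ_s`-norm of the `ℓ_r`-norms of the columns. -/
noncomputable def matNormRS {m n : ℕ} (r s : ℝ) (M : Matrix (Fin m) (Fin n) ℝ) : ℝ :=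
  (∑ j, lrNorm r (fun i => M i j) ^ s) ^ (1 / s)

/-- The matrix `(r,∞)`-norm: maximum of the `ℓ_r`-norms of the columns. -/
noncomputable def matNormRInf {m n : ℕ} (r : ℝ) (M : Matrix (Fin m) (Fin n) ℝ) : ℝ :=
  ⨆ j, lrNorm r (fun i => M i j)

/-- The `(r,r)`-operator norm `sup_{u ≠ 0} ‖Mu‖_r / ‖u‖_r` (with the convention `0/0 = 0`). -/
noncomputable def matOpNorm {m n : ℕ} (r : ℝ) (M : Matrix (Fin m) (Fin n) ℝ) : ℝ :=
  ⨆ u : Fin n → ℝ, lrNorm r (M.mulVec u) / lrNorm r u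

/-- The Gaussian RBF kernel `exp(−‖q−k‖₂²/(2σ²))`. -/
noncomputable def rbf {dp : ℕ} (σ : ℝ) (q k : Fin dp → ℝ) : ℝ :=
  Real.exp (-(∑ i, (q i - k i) ^ 2) / (2 * σ ^ 2))

/-- Sequence-to-sequence softmax attention: the `ℓ`-th row is `Vᵀ p^ℓ` where
`p^ℓ_m = 𝔎_RBF(k^m, q^ℓ)/Σ_{m'} 𝔎_RBF(k^{m'}, q^ℓ)`. -/
noncomputable def attnSM {L dp d : ℕ} (σ : ℝ) (Q K : Matrix (Fin L) (Fin dp) ℝ)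
    (V : Matrix (Fin L) (Fin d) ℝ) : Matrix (Fin L) (Fin d) ℝ :=
  Matrix.of fun ℓ j => ∑ m, (rbf σ (K m) (Q ℓ) / ∑ m', rbf σ (K m') (Q ℓ)) * V m j

/-- Multihead attention `mha(X; W) = Σ_{i=1}^h attn_SM(XW_i^q, XW_i^k, XW_i^v)`. -/
noncomputable def mha {L d dp h : ℕ} (σ : ℝ)
    (Wq Wk : Fin h → Matrix (Fin d) (Fin dp) ℝ)
    (Wv : Fin h → Matrix (Fin d) (Fin d) ℝ)
    (X : Matrix (Fin L) (Fin d) ℝ) : Matrix (Fin L) (Fin d) ℝ :=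
  ∑ i, attnSM σ (X * Wq i) (X * Wk i) (X * Wv i)

open Finset

set_option maxHeartbeats 1000000

section Helpers



variable {n m : ℕ} {r s : ℝ}

lemma lrNorm_nonneg (r : ℝ) (v : Fin m → ℝ) : 0 ≤ lrNorm r v :=
  Real.rpow_nonneg (Finset.sum_nonneg fun i _ => Real.rpow_nonneg (abs_nonneg _) r) _

lemma lrNorm_mono (hr : 0 < r) {v w : Fin m → ℝ} (h : ∀ i, |v i| ≤ |w i|) :
    lrNorm r v ≤ lrNorm r w := by
  apply Real.rpow_le_rpow (Finset.sum_nonneg fun i _ => Real.rpow_nonneg (abs_nonneg _) r)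
    (Finset.sum_le_sum fun i _ => Real.rpow_le_rpow (abs_nonneg _) (h i) hr.le)
    (by positivity)

lemma abs_le_lrNorm (hr : 0 < r) (v : Fin m → ℝ) (i : Fin m) : |v i| ≤ lrNorm r v := by
  have h1 : |v i| ^ r ≤ ∑ j, |v j| ^ r :=
    Finset.single_le_sum (f := fun j => |v j| ^ r)
      (fun j _ => Real.rpow_nonneg (abs_nonneg _) r) (Finset.mem_univ i)
  have h2 := Real.rpow_le_rpow (Real.rpow_nonneg (abs_nonneg _) r) h1 (by positivity : (0:ℝ) ≤ 1/r)
  have h3 : (|v i| ^ r) ^ (1/r) = |v i| := by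
    rw [← Real.rpow_mul (abs_nonneg _), mul_one_div, div_self hr.ne', Real.rpow_one]
  rw [h3] at h2; exact h2

lemma lrNorm_smul (hr : 0 < r) (c : ℝ) (v : Fin m → ℝ) :
    lrNorm r (fun i => c * v i) = |c| * lrNorm r v := by
  unfold lrNorm
  have : ∀ i : Fin m, |c * v i| ^ r = |c| ^ r * |v i| ^ r := fun i => by
    rw [abs_mul, Real.mul_rpow (abs_nonneg _) (abs_nonneg _)]
  simp_rw [this, ← Finset.mul_sum]
  rw [Real.mul_rpow (Real.rpow_nonneg (abs_nonneg _) _)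
    (Finset.sum_nonneg fun i _ => Real.rpow_nonneg (abs_nonneg _) r),
    ← Real.rpow_mul (abs_nonneg _), mul_one_div, div_self hr.ne', Real.rpow_one]

lemma lrNorm_add_le (hr : 1 ≤ r) (v w : Fin m → ℝ) :
    lrNorm r (fun i => v i + w i) ≤ lrNorm r v + lrNorm r w := by
  unfold lrNorm
  exact Real.Lp_add_le Finset.univ v w hr

lemma lrNorm_zero (hr : 0 < r) : lrNorm r (fun _ : Fin m => (0:ℝ)) = 0 := by
  unfold lrNorm
  rw [show (∑ i : Fin m, |(0:ℝ)| ^ r) = 0 by simp [Real.zero_rpow hr.ne'],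
    Real.zero_rpow (by positivity)]

lemma lrNorm_sum_le (hr : 1 ≤ r) (f : Fin n → Fin m → ℝ) :
    lrNorm r (fun i => ∑ j, f j i) ≤ ∑ j, lrNorm r (f j) := by
  classical
  induction (Finset.univ : Finset (Fin n)) using Finset.induction with
  | empty => simp [lrNorm_zero (lt_of_lt_of_le zero_lt_one hr)]
  | @insert a t hj ih =>
      rw [Finset.sum_insert hj]
      calc lrNorm r (fun i => ∑ j ∈ insert a t, f j i)
          = lrNorm r (fun i => f a i + ∑ j ∈ t, f j i) := by
            congr 1; funext i; rw [Finset.sum_insert hj]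
        _ ≤ lrNorm r (f a) + lrNorm r (fun i => ∑ j ∈ t, f j i) := lrNorm_add_le hr _ _
        _ ≤ _ := by exact add_le_add (le_refl _) ih




lemma holder (hrs : r.HolderConjugate s) (f g : Fin m → ℝ) :
    ∑ i, |f i| * |g i| ≤ lrNorm r f * lrNorm s g := by
  have := Real.inner_le_Lp_mul_Lq (Finset.univ) (fun i => |f i|) (fun i => |g i|) hrs
  simpa only [abs_abs, lrNorm] using this

lemma matNormRS_nonneg (r s : ℝ) (M : Matrix (Fin m) (Fin n) ℝ) : 0 ≤ matNormRS r s M :=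
  Real.rpow_nonneg (Finset.sum_nonneg fun j _ => Real.rpow_nonneg (lrNorm_nonneg r _) s) _

/-- `‖M u‖_r ≤ ‖M‖_{r,s} ‖u‖_r`. -/
lemma lrNorm_mulVec_le_RS (hrs : r.HolderConjugate s) (M : Matrix (Fin m) (Fin n) ℝ)
    (u : Fin n → ℝ) : lrNorm r (M.mulVec u) ≤ matNormRS r s M * lrNorm r u := by
  have hr1 : 1 ≤ r := hrs.lt.le
  calc lrNorm r (M.mulVec u)
      = lrNorm r (fun i => ∑ j, u j * M i j) := by
        unfold Matrix.mulVec dotProduct; simp_rw [mul_comm]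
    _ ≤ ∑ j, lrNorm r (fun i => u j * M i j) := lrNorm_sum_le hr1 _
    _ = ∑ j, |u j| * lrNorm r (fun i => M i j) := by
        refine Finset.sum_congr rfl fun j _ => lrNorm_smul hrs.pos _ _
    _ ≤ lrNorm r u * matNormRS r s M := by
        have := holder hrs u (fun j => lrNorm r (fun i => M i j))
        refine le_trans (le_of_eq ?_) (le_trans this (le_of_eq ?_))
        · exact Finset.sum_congr rfl fun j _ => by
            rw [abs_of_nonneg (lrNorm_nonneg _ _)]
        · congr 1
          unfold matNormRS lrNorm
          congr 1
          refine Finset.sum_congr rfl fun j _ => ?_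
          rw [abs_of_nonneg]
          exact Real.rpow_nonneg (Finset.sum_nonneg fun i _ => Real.rpow_nonneg (abs_nonneg _) r) _
    _ = matNormRS r s M * lrNorm r u := mul_comm _ _

lemma bddAbove_opRatio (hrs : r.HolderConjugate s) (M : Matrix (Fin m) (Fin n) ℝ) :
    BddAbove (Set.range fun u : Fin n → ℝ => lrNorm r (M.mulVec u) / lrNorm r u) := by
  refine ⟨matNormRS r s M, fun x hx => ?_⟩
  obtain ⟨u, rfl⟩ := hx
  rcases eq_or_lt_of_le (lrNorm_nonneg r u) with h | h
  · simp only [← h, div_zero]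
    exact matNormRS_nonneg r s M
  · rw [div_le_iff₀ h]
    exact lrNorm_mulVec_le_RS hrs M u

lemma matOpNorm_nonneg (hrs : r.HolderConjugate s) (M : Matrix (Fin m) (Fin n) ℝ) :
    0 ≤ matOpNorm r M := by
  have h0 := le_ciSup (bddAbove_opRatio hrs M) (0 : Fin n → ℝ)
  refine le_trans (le_of_eq ?_) h0
  have hz : lrNorm r (0 : Fin n → ℝ) = 0 := lrNorm_zero hrs.pos
  rw [hz, div_zero]

/-- `‖M u‖_r ≤ ‖M‖_op ‖u‖_r`. -/
lemma lrNorm_mulVec_le_op (hrs : r.HolderConjugate s) (M : Matrix (Fin m) (Fin n) ℝ)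
    (u : Fin n → ℝ) : lrNorm r (M.mulVec u) ≤ matOpNorm r M * lrNorm r u := by
  rcases eq_or_lt_of_le (lrNorm_nonneg r u) with h | h
  · -- lrNorm u = 0, so u = 0
    have hu : ∀ j, u j = 0 := by
      intro j
      have := abs_le_lrNorm hrs.pos u j
      rw [← h] at this
      exact abs_eq_zero.mp (le_antisymm this (abs_nonneg _))
    have : M.mulVec u = 0 := by
      funext i; unfold Matrix.mulVec dotProduct; simp [hu]
    rw [this, ← h, mul_zero]
    show lrNorm r (fun _ => (0:ℝ)) ≤ 0
    rw [lrNorm_zero hrs.pos]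
  · have h1 : lrNorm r (M.mulVec u) / lrNorm r u ≤ matOpNorm r M :=
      le_ciSup (bddAbove_opRatio hrs M) u
    rw [div_le_iff₀ h] at h1
    exact h1

/-- `sinh t ≤ t cosh t` for `t ≥ 0`, i.e. `tanh t ≤ t`. -/
lemma sinh_le_mul_cosh {t : ℝ} (ht : 0 ≤ t) : Real.sinh t ≤ t * Real.cosh t := by
  have key : MonotoneOn (fun x => x * Real.cosh x - Real.sinh x) (Set.Ici 0) := by
    apply monotoneOn_of_deriv_nonneg (convex_Ici 0)
    · fun_prop
    · fun_prop
    · intro x hx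
      rw [interior_Ici] at hx
      have hdiff : deriv (fun x => x * Real.cosh x - Real.sinh x) x = x * Real.sinh x := by
        rw [deriv_fun_sub (by fun_prop) (by fun_prop), Real.deriv_sinh]
        rw [deriv_fun_mul (by fun_prop) (by fun_prop)]
        simp only [Real.deriv_cosh, deriv_id'']
        ring
      rw [hdiff]
      exact mul_nonneg (le_of_lt hx) (Real.sinh_nonneg_iff.mpr (le_of_lt hx))
  have h0 := key (Set.self_mem_Ici) (Set.mem_Ici.mpr ht) ht
  simp only [Real.sinh_zero, Real.cosh_zero, mul_one, zero_mul, sub_zero, mul_zero] at h0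
  linarith [h0]

/-- Key algebraic inequality for the softmax TV bound. -/
lemma softmax_frac_key {A B t : ℝ} (hA : 0 ≤ A) (hB : 0 ≤ B) (hAB : 0 < A + B) (ht : 0 ≤ t) :
    A * Real.exp t / (A * Real.exp t + B * Real.exp (-t)) - A / (A + B) ≤ t / 2 := by
  set E := Real.exp (t/2) with hE
  have hEpos : 0 < E := Real.exp_pos _
  have het : Real.exp t = E * E := by rw [hE, ← Real.exp_add]; ring_nf
  have hemt : Real.exp (-t) = E⁻¹ * E⁻¹ := by
    rw [hE, ← Real.exp_neg, ← Real.exp_add]; congr 1; ring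
  have hden1 : 0 < A * Real.exp t + B * Real.exp (-t) := by
    rcases (lt_or_ge 0 A) with h | h
    · have : 0 < A * Real.exp t := mul_pos h (Real.exp_pos t)
      nlinarith [mul_nonneg hB (Real.exp_pos (-t)).le]
    · have hA0 : A = 0 := le_antisymm h hA
      have hB0 : 0 < B := by rw [hA0] at hAB; simpa using hAB
      rw [hA0]
      simpa using mul_pos hB0 (Real.exp_pos (-t))
  rw [div_sub_div _ _ hden1.ne' hAB.ne', div_le_iff₀ (mul_pos hden1 hAB)]
  have expand : A * Real.exp t * (A + B) - (A * Real.exp t + B * Real.exp (-t)) * A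
      = A * B * (Real.exp t - Real.exp (-t)) := by ring
  rw [expand]
  -- key: exp t - exp (-t) ≤ (t/2) * (E + E⁻¹)^2  where (E+E⁻¹)^2 relates to denominators
  have hsinh := sinh_le_mul_cosh (by linarith : (0:ℝ) ≤ t/2)
  rw [Real.sinh_eq, Real.cosh_eq] at hsinh
  -- (A E² + B E⁻²)(A+B) ≥ AB (E + E⁻¹)²
  have hAMGM : A * B * (E + E⁻¹)^2 ≤ (A * Real.exp t + B * Real.exp (-t)) * (A + B) := by
    rw [het, hemt]
    nlinarith [sq_nonneg (A * E - B * E⁻¹), mul_pos hEpos (inv_pos.mpr hEpos), sq_nonneg (E - E⁻¹)]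
  have hfac : Real.exp t - Real.exp (-t) = (E - E⁻¹) * (E + E⁻¹) := by
    rw [het, hemt]; field_simp; ring
  have hsinh' : E - E⁻¹ ≤ (t/2) * (E + E⁻¹) := by
    have hEinv : Real.exp (-(t/2)) = E⁻¹ := by rw [hE, Real.exp_neg]
    rw [hEinv] at hsinh
    linarith
  calc A * B * (Real.exp t - Real.exp (-t))
      = A * B * ((E - E⁻¹) * (E + E⁻¹)) := by rw [hfac]
    _ ≤ A * B * ((t/2) * (E + E⁻¹) * (E + E⁻¹)) := by
        apply mul_le_mul_of_nonneg_left _ (mul_nonneg hA hB)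
        apply mul_le_mul_of_nonneg_right hsinh'
        positivity
    _ = (t/2) * (A * B * (E + E⁻¹)^2) := by ring
    _ ≤ (t/2) * ((A * Real.exp t + B * Real.exp (-t)) * (A + B)) := by
        apply mul_le_mul_of_nonneg_left hAMGM (by linarith)
    _ = t / 2 * ((A * Real.exp t + B * Real.exp (-t)) * (A + B)) := rfl

/-- ℓ¹ distance between two softmax distributions is at most the sup-distance of logits. -/
lemma softmax_tv {L : ℕ} [NeZero L] (a b : Fin L → ℝ) {ε : ℝ} (hε : 0 ≤ ε)
    (h : ∀ m, |a m - b m| ≤ ε) :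
    ∑ m, |Real.exp (a m) / (∑ m', Real.exp (a m')) -
          Real.exp (b m) / (∑ m', Real.exp (b m'))| ≤ ε := by
  classical
  have hne : (Finset.univ : Finset (Fin L)).Nonempty := Finset.univ_nonempty
  have hZa : 0 < ∑ m', Real.exp (a m') :=
    Finset.sum_pos (fun m _ => Real.exp_pos _) hne
  have hZb : 0 < ∑ m', Real.exp (b m') :=
    Finset.sum_pos (fun m _ => Real.exp_pos _) hne
  set Za := ∑ m', Real.exp (a m') with hZadef
  set Zb := ∑ m', Real.exp (b m') with hZbdef
  set x : Fin L → ℝ := fun m => Real.exp (a m) / Za - Real.exp (b m) / Zb with hx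
  have hsumx : ∑ m, x m = 0 := by
    rw [hx]
    simp only
    rw [Finset.sum_sub_distrib, ← Finset.sum_div, ← Finset.sum_div, ← hZadef, ← hZbdef,
      div_self hZa.ne', div_self hZb.ne', sub_self]
  set S := Finset.univ.filter (fun m => 0 ≤ x m) with hS
  have hsplit : ∑ m ∈ S, x m + ∑ m ∈ Sᶜ, x m = 0 := by
    rw [Finset.sum_add_sum_compl]; exact hsumx
  have habs : ∑ m, |x m| = 2 * ∑ m ∈ S, x m := by
    rw [← Finset.sum_add_sum_compl S (fun m => |x m|)]
    have h1 : ∑ m ∈ S, |x m| = ∑ m ∈ S, x m :=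
      Finset.sum_congr rfl fun m hm => abs_of_nonneg (Finset.mem_filter.mp hm).2
    have h2 : ∑ m ∈ Sᶜ, |x m| = ∑ m ∈ Sᶜ, (- x m) := by
      refine Finset.sum_congr rfl fun m hm => ?_
      have := Finset.mem_compl.mp hm
      rw [hS, Finset.mem_filter] at this
      push_neg at this
      exact abs_of_neg (this (Finset.mem_univ m))
    rw [h1, h2, Finset.sum_neg_distrib]
    linarith [hsplit]
  rw [habs]
  -- now bound ∑_{m ∈ S} x m ≤ ε / 2
  rcases Finset.eq_empty_or_nonempty S with hSe | hSne
  · rw [hSe]; simp; linarith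
  set SA := ∑ m ∈ S, Real.exp (a m) with hSA
  set SB := ∑ m ∈ Sᶜ, Real.exp (a m) with hSB
  set A := ∑ m ∈ S, Real.exp (b m) with hA
  set B := ∑ m ∈ Sᶜ, Real.exp (b m) with hB
  have hSApos : 0 < SA := Finset.sum_pos (fun m _ => Real.exp_pos _) hSne
  have hApos : 0 < A := Finset.sum_pos (fun m _ => Real.exp_pos _) hSne
  have hBnn : 0 ≤ B := Finset.sum_nonneg fun m _ => (Real.exp_pos _).le
  have hSBnn : 0 ≤ SB := Finset.sum_nonneg fun m _ => (Real.exp_pos _).le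
  have hZaSplit : Za = SA + SB := by rw [hZadef, hSA, hSB, Finset.sum_add_sum_compl]
  have hZbSplit : Zb = A + B := by rw [hZbdef, hA, hB, Finset.sum_add_sum_compl]
  have hsumS : ∑ m ∈ S, x m = SA / Za - A / Zb := by
    rw [hx]
    simp only
    rw [Finset.sum_sub_distrib, ← Finset.sum_div, ← Finset.sum_div, ← hSA, ← hA]
  have hSAle : SA ≤ Real.exp ε * A := by
    rw [hSA, hA, Finset.mul_sum]
    refine Finset.sum_le_sum fun m _ => ?_
    rw [← Real.exp_add]
    apply Real.exp_le_exp.mpr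
    have := (abs_le.mp (h m)).2
    linarith
  have hSBge : Real.exp (-ε) * B ≤ SB := by
    rw [hSB, hB, Finset.mul_sum]
    refine Finset.sum_le_sum fun m _ => ?_
    rw [← Real.exp_add]
    apply Real.exp_le_exp.mpr
    have := (abs_le.mp (h m)).1
    linarith
  have hden2 : 0 < SA + Real.exp (-ε) * B :=
    lt_of_lt_of_le hSApos (by nlinarith [mul_nonneg (Real.exp_pos (-ε)).le hBnn])
  have hden3 : 0 < A * Real.exp ε + B * Real.exp (-ε) := by
    have : 0 < A * Real.exp ε := mul_pos hApos (Real.exp_pos _)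
    nlinarith [mul_nonneg hBnn (Real.exp_pos (-ε)).le]
  have step1 : SA / Za ≤ SA / (SA + Real.exp (-ε) * B) := by
    apply div_le_div_of_nonneg_left hSApos.le hden2
    rw [hZaSplit]
    linarith
  have step2 : SA / (SA + Real.exp (-ε) * B) ≤
      A * Real.exp ε / (A * Real.exp ε + B * Real.exp (-ε)) := by
    rw [div_le_div_iff₀ hden2 hden3]
    have hc : 0 ≤ Real.exp (-ε) * B := mul_nonneg (Real.exp_pos _).le hBnn
    nlinarith [hSAle, hc, mul_le_mul_of_nonneg_right hSAle hc]
  have step3 : A * Real.exp ε / (A * Real.exp ε + B * Real.exp (-ε)) - A / (A + B) ≤ ε / 2 := by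
    have := softmax_frac_key hApos.le hBnn (by rw [← hZbSplit]; exact hZb) hε
    linarith
  have : ∑ m ∈ S, x m ≤ ε / 2 := by
    rw [hsumS, hZbSplit]
    have := le_trans step1 step2
    linarith
  linarith

lemma lrNorm_neg (r : ℝ) (v : Fin m → ℝ) : lrNorm r (fun i => - v i) = lrNorm r v := by
  unfold lrNorm; simp

lemma lrNorm_sub_le (hr : 1 ≤ r) (v w : Fin m → ℝ) :
    lrNorm r (fun i => v i - w i) ≤ lrNorm r v + lrNorm r w := by
  have := lrNorm_add_le hr v (fun i => - w i)
  simp only [lrNorm_neg] at this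
  simpa [sub_eq_add_neg] using this

lemma lrNorm_le_card {s : ℝ} (hs : 0 < s) {C : ℝ} (hC : 0 ≤ C) (v : Fin m → ℝ)
    (h : ∀ i, |v i| ≤ C) : lrNorm s v ≤ (m : ℝ) ^ (1 / s) * C := by
  have h1 : ∑ i, |v i| ^ s ≤ (m : ℝ) * C ^ s := by
    calc ∑ i, |v i| ^ s ≤ ∑ _i : Fin m, C ^ s :=
          Finset.sum_le_sum fun i _ => Real.rpow_le_rpow (abs_nonneg _) (h i) hs.le
      _ = (m : ℝ) * C ^ s := by simp [mul_comm]
  calc lrNorm s v ≤ ((m : ℝ) * C ^ s) ^ (1 / s) :=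
        Real.rpow_le_rpow (Finset.sum_nonneg fun i _ => Real.rpow_nonneg (abs_nonneg _) s) h1
          (by positivity)
    _ = (m : ℝ) ^ (1 / s) * C := by
        rw [Real.mul_rpow (Nat.cast_nonneg m) (Real.rpow_nonneg hC s),
          ← Real.rpow_mul hC, mul_one_div, div_self hs.ne', Real.rpow_one]

lemma col_le_matNormRInf (r : ℝ) (M : Matrix (Fin m) (Fin n) ℝ) (j : Fin n) :
    lrNorm r (fun i => M i j) ≤ matNormRInf r M :=
  le_ciSup (f := fun j => lrNorm r (fun i => M i j))
    (Set.Finite.bddAbove (Set.finite_range _)) j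

lemma row_mul_eq_mulVec {L d n : ℕ} (X : Matrix (Fin L) (Fin d) ℝ)
    (W : Matrix (Fin d) (Fin n) ℝ) (m : Fin L) (j : Fin n) :
    (X * W) m j = (Wᵀ.mulVec (X m)) j := by
  simp [Matrix.mul_apply, Matrix.mulVec, dotProduct, Matrix.transpose_apply, mul_comm]



/-- Per-head bound. -/
lemma head_bound {L dp d : ℕ} [NeZero L] {r s σ : ℝ} (hr : 1 < r) (hs : 1 < s)
    (hrs : 1 / r + 1 / s = 1) (hσ : (2 * (dp : ℝ)) ^ (1 / s) ≤ σ ^ 2)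
    (Xt : Matrix (Fin L) (Fin d) ℝ) {Rt : ℝ} (hX : matNormRInf r Xtᵀ ≤ Rt)
    (Wq Wk Wqh Wkh : Matrix (Fin d) (Fin dp) ℝ)
    (Wv Wvh : Matrix (Fin d) (Fin d) ℝ)
    {ωq ωk ωv εq εk εv : ℝ}
    (hωq : matOpNorm r Wqᵀ ≤ ωq) (hωqh : matOpNorm r Wqhᵀ ≤ ωq)
    (hωk : matOpNorm r Wkᵀ ≤ ωk) (hωkh : matOpNorm r Wkhᵀ ≤ ωk)
    (hωv : matOpNorm r Wvᵀ ≤ ωv) (hωvh : matOpNorm r Wvhᵀ ≤ ωv)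
    (hεq : matNormRS r s (Wq - Wqh)ᵀ ≤ εq)
    (hεk : matNormRS r s (Wk - Wkh)ᵀ ≤ εk)
    (hεv : matNormRS r s (Wv - Wvh)ᵀ ≤ εv) (ℓ : Fin L) :
    lrNorm r (fun j => attnSM σ (Xt * Wq) (Xt * Wk) (Xt * Wv) ℓ j
        - attnSM σ (Xt * Wqh) (Xt * Wkh) (Xt * Wvh) ℓ j)
      ≤ Rt * εv + Rt ^ 3 * ((ωq + ωk) * ωv * (εq + εk)) := by
  have hrs' : r.HolderConjugate s := Real.holderConjugate_iff.mpr ⟨hr, by rw [← one_div, ← one_div]; exact hrs⟩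
  have hr0 : 0 < r := hrs'.pos
  have hs0 : 0 < s := by linarith
  -- nonnegativity of the constants
  have hRt : 0 ≤ Rt := by
    refine le_trans ?_ hX
    refine le_trans (lrNorm_nonneg r fun i => Xtᵀ i ⟨0, Nat.pos_of_ne_zero (NeZero.ne L)⟩) ?_
    exact col_le_matNormRInf r Xtᵀ _
  have hωq0 : 0 ≤ ωq := le_trans (matOpNorm_nonneg hrs' _) hωq
  have hωk0 : 0 ≤ ωk := le_trans (matOpNorm_nonneg hrs' _) hωk
  have hωv0 : 0 ≤ ωv := le_trans (matOpNorm_nonneg hrs' _) hωv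
  have hεq0 : 0 ≤ εq := le_trans (matNormRS_nonneg r s _) hεq
  have hεk0 : 0 ≤ εk := le_trans (matNormRS_nonneg r s _) hεk
  have hεv0 : 0 ≤ εv := le_trans (matNormRS_nonneg r s _) hεv
  -- rows of Xt have norm ≤ Rt
  have hxm : ∀ m : Fin L, lrNorm r (Xt m) ≤ Rt := fun m =>
    le_trans (col_le_matNormRInf r Xtᵀ m) hX
  -- row norms of products
  have hrowQ : ∀ m : Fin L, lrNorm r ((Xt * Wq) m) ≤ ωq * Rt := by
    intro m
    have h1 : (Xt * Wq) m = Wqᵀ.mulVec (Xt m) := funext fun j => row_mul_eq_mulVec Xt Wq m j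
    rw [h1]
    exact le_trans (lrNorm_mulVec_le_op hrs' _ _)
      (mul_le_mul hωq (hxm m) (lrNorm_nonneg _ _) hωq0)
  have hrowQh : ∀ m : Fin L, lrNorm r ((Xt * Wqh) m) ≤ ωq * Rt := by
    intro m
    have h1 : (Xt * Wqh) m = Wqhᵀ.mulVec (Xt m) := funext fun j => row_mul_eq_mulVec Xt Wqh m j
    rw [h1]
    exact le_trans (lrNorm_mulVec_le_op hrs' _ _)
      (mul_le_mul hωqh (hxm m) (lrNorm_nonneg _ _) hωq0)
  have hrowK : ∀ m : Fin L, lrNorm r ((Xt * Wk) m) ≤ ωk * Rt := by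
    intro m
    have h1 : (Xt * Wk) m = Wkᵀ.mulVec (Xt m) := funext fun j => row_mul_eq_mulVec Xt Wk m j
    rw [h1]
    exact le_trans (lrNorm_mulVec_le_op hrs' _ _)
      (mul_le_mul hωk (hxm m) (lrNorm_nonneg _ _) hωk0)
  have hrowKh : ∀ m : Fin L, lrNorm r ((Xt * Wkh) m) ≤ ωk * Rt := by
    intro m
    have h1 : (Xt * Wkh) m = Wkhᵀ.mulVec (Xt m) := funext fun j => row_mul_eq_mulVec Xt Wkh m j
    rw [h1]
    exact le_trans (lrNorm_mulVec_le_op hrs' _ _)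
      (mul_le_mul hωkh (hxm m) (lrNorm_nonneg _ _) hωk0)
  have hrowVh : ∀ m : Fin L, lrNorm r ((Xt * Wvh) m) ≤ ωv * Rt := by
    intro m
    have h1 : (Xt * Wvh) m = Wvhᵀ.mulVec (Xt m) := funext fun j => row_mul_eq_mulVec Xt Wvh m j
    rw [h1]
    exact le_trans (lrNorm_mulVec_le_op hrs' _ _)
      (mul_le_mul hωvh (hxm m) (lrNorm_nonneg _ _) hωv0)
  -- difference of rows of value-products
  have hrowDV : ∀ m : Fin L, lrNorm r (fun j => (Xt * Wv) m j - (Xt * Wvh) m j) ≤ εv * Rt := by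
    intro m
    have h1 : (fun j => (Xt * Wv) m j - (Xt * Wvh) m j) = (Wv - Wvh)ᵀ.mulVec (Xt m) := by
      funext j
      rw [row_mul_eq_mulVec Xt Wv m j, row_mul_eq_mulVec Xt Wvh m j]
      simp [Matrix.mulVec, dotProduct, Matrix.sub_apply, sub_mul, Finset.sum_sub_distrib]
    rw [h1]
    exact le_trans (lrNorm_mulVec_le_RS hrs' _ _)
      (mul_le_mul hεv (hxm m) (lrNorm_nonneg _ _) hεv0)
  have hrowDK : ∀ m : Fin L, lrNorm r (fun j => (Xt * Wk) m j - (Xt * Wkh) m j) ≤ εk * Rt := by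
    intro m
    have h1 : (fun j => (Xt * Wk) m j - (Xt * Wkh) m j) = (Wk - Wkh)ᵀ.mulVec (Xt m) := by
      funext j
      rw [row_mul_eq_mulVec Xt Wk m j, row_mul_eq_mulVec Xt Wkh m j]
      simp [Matrix.mulVec, dotProduct, Matrix.sub_apply, sub_mul, Finset.sum_sub_distrib]
    rw [h1]
    exact le_trans (lrNorm_mulVec_le_RS hrs' _ _)
      (mul_le_mul hεk (hxm m) (lrNorm_nonneg _ _) hεk0)
  have hrowDQ : ∀ m : Fin L, lrNorm r (fun j => (Xt * Wq) m j - (Xt * Wqh) m j) ≤ εq * Rt := by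
    intro m
    have h1 : (fun j => (Xt * Wq) m j - (Xt * Wqh) m j) = (Wq - Wqh)ᵀ.mulVec (Xt m) := by
      funext j
      rw [row_mul_eq_mulVec Xt Wq m j, row_mul_eq_mulVec Xt Wqh m j]
      simp [Matrix.mulVec, dotProduct, Matrix.sub_apply, sub_mul, Finset.sum_sub_distrib]
    rw [h1]
    exact le_trans (lrNorm_mulVec_le_RS hrs' _ _)
      (mul_le_mul hεq (hxm m) (lrNorm_nonneg _ _) hεq0)
  -- softmax weights
  set Q := Xt * Wq with hQ
  set K := Xt * Wk with hK
  set Qh := Xt * Wqh with hQh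
  set Kh := Xt * Wkh with hKh
  set V := Xt * Wv with hV
  set Vh := Xt * Wvh with hVh
  set a : Fin L → ℝ := fun m => -(∑ i, (K m i - Q ℓ i) ^ 2) / (2 * σ ^ 2) with ha
  set b : Fin L → ℝ := fun m => -(∑ i, (Kh m i - Qh ℓ i) ^ 2) / (2 * σ ^ 2) with hb
  have hrbf1 : ∀ m, rbf σ (K m) (Q ℓ) = Real.exp (a m) := fun m => rfl
  have hrbf2 : ∀ m, rbf σ (Kh m) (Qh ℓ) = Real.exp (b m) := fun m => rfl
  set Z := ∑ m', rbf σ (K m') (Q ℓ) with hZ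
  set Zh := ∑ m', rbf σ (Kh m') (Qh ℓ) with hZh
  have hZpos : 0 < Z := Finset.sum_pos (fun m _ => Real.exp_pos _) Finset.univ_nonempty
  have hZhpos : 0 < Zh := Finset.sum_pos (fun m _ => Real.exp_pos _) Finset.univ_nonempty
  set p : Fin L → ℝ := fun m => rbf σ (K m) (Q ℓ) / Z with hp
  set ph : Fin L → ℝ := fun m => rbf σ (Kh m) (Qh ℓ) / Zh with hph
  have hpnn : ∀ m, 0 ≤ p m := fun m => div_nonneg (by rw [hrbf1]; positivity) hZpos.le
  have hpsum : ∑ m, p m = 1 := by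
    rw [hp]; simp only; rw [← Finset.sum_div, ← hZ, div_self hZpos.ne']
  -- the per-coordinate ε bound on logits
  set ε₀ : ℝ := Rt ^ 2 * (ωq + ωk) * (εq + εk) with hε₀
  have hε₀nn : 0 ≤ ε₀ := by positivity
  have hdiff : ∀ m, |a m - b m| ≤ ε₀ := by
    intro m
    rcases Nat.eq_zero_or_pos dp with hdp | hdp
    · subst hdp
      simp only [ha, hb]
      rw [show (∑ i : Fin 0, (K m i - Q ℓ i) ^ 2) = 0 from Finset.sum_empty,
        show (∑ i : Fin 0, (Kh m i - Qh ℓ i) ^ 2) = 0 from Finset.sum_empty]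
      simpa using hε₀nn
    · have hσ2 : 0 < σ ^ 2 :=
        lt_of_lt_of_le (Real.rpow_pos_of_pos (by positivity) _) hσ
      have hdple : ((dp : ℝ)) ^ (1 / s) ≤ σ ^ 2 := by
        refine le_trans ?_ hσ
        apply Real.rpow_le_rpow (Nat.cast_nonneg dp) (by linarith [Nat.cast_nonneg (α := ℝ) dp])
          (by positivity)
      set u : Fin dp → ℝ := fun i => K m i - Q ℓ i with hu
      set v : Fin dp → ℝ := fun i => Kh m i - Qh ℓ i with hv
      -- bound lrNorm r (u - v)
      have hA : lrNorm r (fun i => u i - v i) ≤ (εq + εk) * Rt := by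
        have heq : (fun i => u i - v i)
            = fun i => (K m i - Kh m i) - (Q ℓ i - Qh ℓ i) := by
          funext i; rw [hu, hv]; ring
        rw [heq]
        refine le_trans (lrNorm_sub_le hr.le _ _) ?_
        have h1 := hrowDK m
        have h2 := hrowDQ ℓ
        linarith
      -- coordinatewise bound on u + v
      have hcoord : ∀ i, |u i + v i| ≤ 2 * ((ωq + ωk) * Rt) := by
        intro i
        have h1 : |u i| ≤ lrNorm r u := abs_le_lrNorm hr0 u i
        have h2 : |v i| ≤ lrNorm r v := abs_le_lrNorm hr0 v i
        have h3 : lrNorm r u ≤ (ωq + ωk) * Rt := by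
          refine le_trans (lrNorm_sub_le hr.le (fun i => K m i) (fun i => Q ℓ i)) ?_
          have := hrowK m; have := hrowQ ℓ
          have hK' : lrNorm r (fun i => K m i) = lrNorm r (K m) := rfl
          have hQ' : lrNorm r (fun i => Q ℓ i) = lrNorm r (Q ℓ) := rfl
          rw [hK', hQ']
          linarith [hrowK m, hrowQ ℓ]
        have h4 : lrNorm r v ≤ (ωq + ωk) * Rt := by
          refine le_trans (lrNorm_sub_le hr.le (fun i => Kh m i) (fun i => Qh ℓ i)) ?_
          linarith [hrowKh m, hrowQh ℓ]
        calc |u i + v i| ≤ |u i| + |v i| := abs_add_le _ _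
          _ ≤ 2 * ((ωq + ωk) * Rt) := by linarith
      have hB : lrNorm s (fun i => u i + v i) ≤ (dp : ℝ) ^ (1 / s) * (2 * ((ωq + ωk) * Rt)) :=
        lrNorm_le_card hs0 (by positivity) _ hcoord
      -- numerator bound
      have hnum : |(∑ i, (K m i - Q ℓ i) ^ 2) - ∑ i, (Kh m i - Qh ℓ i) ^ 2|
          ≤ ((εq + εk) * Rt) * ((dp : ℝ) ^ (1 / s) * (2 * ((ωq + ωk) * Rt))) := by
        have e1 : (∑ i, (K m i - Q ℓ i) ^ 2) - ∑ i, (Kh m i - Qh ℓ i) ^ 2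
            = ∑ i, (u i - v i) * (u i + v i) := by
          rw [← Finset.sum_sub_distrib]
          refine Finset.sum_congr rfl fun i _ => ?_
          rw [hu, hv]; simp only; ring
        rw [e1]
        calc |∑ i, (u i - v i) * (u i + v i)| ≤ ∑ i, |(u i - v i) * (u i + v i)| :=
              Finset.abs_sum_le_sum_abs _ _
          _ = ∑ i, |u i - v i| * |u i + v i| := by
              refine Finset.sum_congr rfl fun i _ => abs_mul _ _
          _ ≤ lrNorm r (fun i => u i - v i) * lrNorm s (fun i => u i + v i) :=
              holder hrs' _ _
          _ ≤ ((εq + εk) * Rt) * ((dp : ℝ) ^ (1 / s) * (2 * ((ωq + ωk) * Rt))) := by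
              apply mul_le_mul hA hB (lrNorm_nonneg _ _) (by positivity)
      have habdiff : a m - b m
          = ((∑ i, (Kh m i - Qh ℓ i) ^ 2) - ∑ i, (K m i - Q ℓ i) ^ 2) / (2 * σ ^ 2) := by
        rw [ha, hb]; ring
      rw [habdiff, abs_div, abs_of_pos (by positivity : (0:ℝ) < 2 * σ ^ 2),
        div_le_iff₀ (by positivity : (0:ℝ) < 2 * σ ^ 2)]
      have habs : |(∑ i, (Kh m i - Qh ℓ i) ^ 2) - ∑ i, (K m i - Q ℓ i) ^ 2|
          = |(∑ i, (K m i - Q ℓ i) ^ 2) - ∑ i, (Kh m i - Qh ℓ i) ^ 2| := abs_sub_comm _ _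
      rw [habs]
      refine le_trans hnum ?_
      rw [hε₀]
      have hC : (0:ℝ) ≤ Rt ^ 2 * (ωq + ωk) * (εq + εk) := by positivity
      nlinarith [mul_le_mul_of_nonneg_right hdple hC]
  -- total variation bound
  have hTV : ∑ m, |p m - ph m| ≤ ε₀ := by
    have := softmax_tv a b hε₀nn hdiff
    simp only [hp, hph, hZ, hZh]
    simp only [hrbf1, hrbf2]
    exact this
  -- decomposition of the attention difference
  have hdecomp : (fun j => attnSM σ Q K V ℓ j - attnSM σ Qh Kh Vh ℓ j)
      = fun j => (∑ m, p m * (V m j - Vh m j)) + ∑ m, (p m - ph m) * Vh m j := by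
    funext j
    show (∑ m, p m * V m j) - (∑ m, ph m * Vh m j) = _
    rw [← Finset.sum_add_distrib, ← Finset.sum_sub_distrib]
    refine Finset.sum_congr rfl fun m _ => by ring
  rw [hdecomp]
  have hT1 : lrNorm r (fun j => ∑ m, p m * (V m j - Vh m j)) ≤ εv * Rt := by
    refine le_trans (lrNorm_sum_le hr.le fun m j => p m * (V m j - Vh m j)) ?_
    have hterm : ∀ m : Fin L, lrNorm r (fun j => p m * (V m j - Vh m j)) ≤ p m * (εv * Rt) := by
      intro m
      rw [lrNorm_smul hr0]
      rw [abs_of_nonneg (hpnn m)]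
      exact mul_le_mul_of_nonneg_left (hrowDV m) (hpnn m)
    refine le_trans (Finset.sum_le_sum fun m _ => hterm m) ?_
    rw [← Finset.sum_mul, hpsum, one_mul]
  have hT2 : lrNorm r (fun j => ∑ m, (p m - ph m) * Vh m j) ≤ ε₀ * (ωv * Rt) := by
    refine le_trans (lrNorm_sum_le hr.le fun m j => (p m - ph m) * Vh m j) ?_
    have hterm : ∀ m : Fin L, lrNorm r (fun j => (p m - ph m) * Vh m j)
        ≤ |p m - ph m| * (ωv * Rt) := by
      intro m
      rw [lrNorm_smul hr0]
      exact mul_le_mul_of_nonneg_left (hrowVh m) (abs_nonneg _)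
    refine le_trans (Finset.sum_le_sum fun m _ => hterm m) ?_
    rw [← Finset.sum_mul]
    exact mul_le_mul_of_nonneg_right hTV (by positivity)
  refine le_trans (lrNorm_add_le hr.le _ _) ?_
  have : ε₀ * (ωv * Rt) = Rt ^ 3 * ((ωq + ωk) * ωv * (εq + εk)) := by rw [hε₀]; ring
  linarith [hT1, hT2]



end Helpers

/-- Lipschitz continuity of multihead attention in its parameters. -/
theorem mha_parameter_lipschitz
    {L dp h d : ℕ} (r s σ : ℝ) (hr : 1 < r) (hs : 1 < s) (hrs : 1 / r + 1 / s = 1)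
    (hd : d = dp * h) (hσ : (2 * (dp : ℝ)) ^ (1 / s) ≤ σ ^ 2)
    (Xt : Matrix (Fin L) (Fin d) ℝ) (Rt : ℝ) (hX : matNormRInf r Xtᵀ ≤ Rt)
    (Wq Wk Wqh Wkh : Fin h → Matrix (Fin d) (Fin dp) ℝ)
    (Wv Wvh : Fin h → Matrix (Fin d) (Fin d) ℝ)
    (ωq ωk ωv εq εk εv : Fin h → ℝ)
    (hωq : ∀ i, matOpNorm r (Wq i)ᵀ ≤ ωq i) (hωqh : ∀ i, matOpNorm r (Wqh i)ᵀ ≤ ωq i)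
    (hωk : ∀ i, matOpNorm r (Wk i)ᵀ ≤ ωk i) (hωkh : ∀ i, matOpNorm r (Wkh i)ᵀ ≤ ωk i)
    (hωv : ∀ i, matOpNorm r (Wv i)ᵀ ≤ ωv i) (hωvh : ∀ i, matOpNorm r (Wvh i)ᵀ ≤ ωv i)
    (hεq : ∀ i, matNormRS r s ((Wq i) - (Wqh i))ᵀ ≤ εq i)
    (hεk : ∀ i, matNormRS r s ((Wk i) - (Wkh i))ᵀ ≤ εk i)
    (hεv : ∀ i, matNormRS r s ((Wv i) - (Wvh i))ᵀ ≤ εv i) :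
    matNormRInf r (mha σ Wq Wk Wv Xt - mha σ Wqh Wkh Wvh Xt)ᵀ
      ≤ Rt * ∑ i, εv i + Rt ^ 3 * ∑ i, (ωq i + ωk i) * ωv i * (εq i + εk i) := by
  have hrs' : r.HolderConjugate s := Real.holderConjugate_iff.mpr ⟨hr, by rw [← one_div, ← one_div]; exact hrs⟩
  have hωq0 : ∀ i, 0 ≤ ωq i := fun i => le_trans (matOpNorm_nonneg hrs' _) (hωq i)
  have hωk0 : ∀ i, 0 ≤ ωk i := fun i => le_trans (matOpNorm_nonneg hrs' _) (hωk i)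
  have hωv0 : ∀ i, 0 ≤ ωv i := fun i => le_trans (matOpNorm_nonneg hrs' _) (hωv i)
  have hεq0 : ∀ i, 0 ≤ εq i := fun i => le_trans (matNormRS_nonneg r s _) (hεq i)
  have hεk0 : ∀ i, 0 ≤ εk i := fun i => le_trans (matNormRS_nonneg r s _) (hεk i)
  have hεv0 : ∀ i, 0 ≤ εv i := fun i => le_trans (matNormRS_nonneg r s _) (hεv i)
  have hRt : 0 ≤ Rt := by
    rcases Nat.eq_zero_or_pos L with hL | hL
    · refine le_trans (le_of_eq ?_) hX
      haveI : IsEmpty (Fin L) := by rw [hL]; exact Fin.isEmpty'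
      exact (Real.iSup_of_isEmpty _).symm
    · exact le_trans (le_trans (lrNorm_nonneg _ _) (col_le_matNormRInf r Xtᵀ ⟨0, hL⟩)) hX
  have hRHS : 0 ≤ Rt * ∑ i, εv i + Rt ^ 3 * ∑ i, (ωq i + ωk i) * ωv i * (εq i + εk i) := by
    apply add_nonneg
    · exact mul_nonneg hRt (Finset.sum_nonneg fun i _ => hεv0 i)
    · refine mul_nonneg (by positivity) (Finset.sum_nonneg fun i _ => ?_)
      have := hωq0 i; have := hωk0 i; have := hωv0 i; have := hεq0 i; have := hεk0 i
      positivity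
  rcases Nat.eq_zero_or_pos L with hL | hL
  · refine le_trans (le_of_eq ?_) hRHS
    haveI : IsEmpty (Fin L) := by rw [hL]; exact Fin.isEmpty'
    exact Real.iSup_of_isEmpty _
  · haveI : NeZero L := ⟨hL.ne'⟩
    refine ciSup_le fun ℓ => ?_
    have hcol : (fun j => (mha σ Wq Wk Wv Xt - mha σ Wqh Wkh Wvh Xt)ᵀ j ℓ)
        = fun j => ∑ i, (attnSM σ (Xt * Wq i) (Xt * Wk i) (Xt * Wv i) ℓ j
            - attnSM σ (Xt * Wqh i) (Xt * Wkh i) (Xt * Wvh i) ℓ j) := by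
      funext j
      simp [mha, Matrix.transpose_apply, Matrix.sub_apply, Matrix.sum_apply,
        Finset.sum_sub_distrib]
    rw [hcol]
    refine le_trans (lrNorm_sum_le hr.le _) ?_
    calc ∑ i, lrNorm r (fun j => attnSM σ (Xt * Wq i) (Xt * Wk i) (Xt * Wv i) ℓ j
            - attnSM σ (Xt * Wqh i) (Xt * Wkh i) (Xt * Wvh i) ℓ j)
        ≤ ∑ i, (Rt * εv i + Rt ^ 3 * ((ωq i + ωk i) * ωv i * (εq i + εk i))) :=
          Finset.sum_le_sum fun i _ => head_bound hr hs hrs hσ Xt hX (Wq i) (Wk i) (Wqh i)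
            (Wkh i) (Wv i) (Wvh i) (hωq i) (hωqh i) (hωk i) (hωkh i) (hωv i) (hωvh i)
            (hεq i) (hεk i) (hεv i) ℓ
      _ = Rt * ∑ i, εv i + Rt ^ 3 * ∑ i, (ωq i + ωk i) * ωv i * (εq i + εk i) := by
          rw [Finset.sum_add_distrib, ← Finset.mul_sum, ← Finset.mul_sum]
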